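/- arXiv:2108.04873 — 3 statements merged into one kernel-verified Lean document; each statement's English description precedes it below -/
import Mathlib

section
/- Let T be a twin class of a finite simple graph G (an equivalence class under the twin relation) with |T| = t, such that T induces an empty graph (T is a coclique, i.e., all pairs in T are duplicates). Then the common degree δ of the vertices of T is a Laplacian eigenvalue of G with multiplicity at least t − 1. -/
attribute [local instance] Classical.propDecidable

/-- If `T` is a twin class of `G` which is a coclique, with common degree `δ`,
then `δ` is a Laplacian eigenvalue of `G` of multiplicity at least `|T| - 1`. -/
theorem coclique_twin_class_lap_multiplicity {V : Type} [Fintype V] [DecidableEq V]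
    (G : SimpleGraph V) (T : Finset V) (hT : T.Nonempty)
    (hclass : ∀ u ∈ T, ∀ v : V,
      (v ∈ T ↔ G.neighborSet u \ {v} = G.neighborSet v \ {u}))
    (hcoclique : ∀ u ∈ T, ∀ v ∈ T, ¬ G.Adj u v)
    (δ : ℕ) (hδ : ∀ u ∈ T, G.degree u = δ) :
    T.card - 1 ≤ Module.finrank ℝ
      (LinearMap.ker (Matrix.toLin' (G.lapMatrix ℝ - (δ : ℝ) • 1))) := by
  obtain ⟨u0, hu0⟩ := hT
  set K := LinearMap.ker (Matrix.toLin' (G.lapMatrix ℝ - (δ : ℝ) • 1)) with hK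
  -- the basic vectors
  set f : V → V → ℝ := fun u => Pi.single u (1 : ℝ) - Pi.single u0 (1 : ℝ) with hf
  -- twins have the same neighborhoods outside the pair
  have twin : ∀ u ∈ T, ∀ w : V, w ≠ u → w ≠ u0 → (G.Adj w u ↔ G.Adj w u0) := by
    intro u hu w hwu hwu0
    have h := (hclass u0 hu0 u).mp hu
    have h1 : w ∈ G.neighborSet u0 \ {u} ↔ w ∈ G.neighborSet u \ {u0} := by rw [h]
    simp only [Set.mem_diff, SimpleGraph.mem_neighborSet, Set.mem_singleton_iff] at h1
    constructor
    · intro hw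
      exact ((h1.mpr ⟨hw.symm, hwu0⟩).1).symm
    · intro hw
      exact ((h1.mp ⟨hw.symm, hwu⟩).1).symm
  -- membership in the kernel
  have hker : ∀ u ∈ T, f u ∈ K := by
    intro u hu
    rw [hK, LinearMap.mem_ker, Matrix.toLin'_apply]
    funext w
    rw [Matrix.sub_mulVec, Matrix.smul_mulVec, Matrix.one_mulVec]
    have hsingle : ∀ z : V, (∑ x ∈ G.neighborFinset w, Pi.single z (1:ℝ) x)
        = if z ∈ G.neighborFinset w then 1 else 0 := by
      intro z
      by_cases hz : z ∈ G.neighborFinset w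
      · rw [if_pos hz, Finset.sum_eq_single z]
        · simp
        · intro b _ hb; exact Pi.single_eq_of_ne hb 1
        · intro h; exact absurd hz h
      · rw [if_neg hz, Finset.sum_eq_zero]
        intro b hb
        exact Pi.single_eq_of_ne (by rintro rfl; exact hz hb) 1
    have key : Matrix.mulVec (G.lapMatrix ℝ) (f u) w = (δ : ℝ) * f u w := by
      rw [SimpleGraph.lapMatrix_mulVec_apply]
      have hsum : ∑ x ∈ G.neighborFinset w, f u x
          = (if u ∈ G.neighborFinset w then (1:ℝ) else 0)
            - (if u0 ∈ G.neighborFinset w then (1:ℝ) else 0) := by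
        simp only [hf, Pi.sub_apply, Finset.sum_sub_distrib, hsingle]
      rw [hsum]
      by_cases hw : w = u
      · rw [hw] at *
        have h1 : u ∉ G.neighborFinset u := by
          simp [SimpleGraph.mem_neighborFinset]
        have h2 : u0 ∉ G.neighborFinset u := by
          simp only [SimpleGraph.mem_neighborFinset]
          exact hcoclique u hu u0 hu0
        rw [if_neg h1, if_neg h2, hδ u hu]
        ring
      · by_cases hw0 : w = u0
        · rw [hw0] at *
          have h1 : u ∉ G.neighborFinset u0 := by
            simp only [SimpleGraph.mem_neighborFinset]
            exact hcoclique u0 hu0 u hu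
          have h2 : u0 ∉ G.neighborFinset u0 := by
            simp [SimpleGraph.mem_neighborFinset]
          rw [if_neg h1, if_neg h2, hδ u0 hu0]
          ring
        · have heq : (u ∈ G.neighborFinset w) ↔ (u0 ∈ G.neighborFinset w) := by
            simp only [SimpleGraph.mem_neighborFinset]
            exact twin u hu w hw hw0
          have hfw : f u w = 0 := by
            simp [hf, Pi.single_eq_of_ne hw, Pi.single_eq_of_ne hw0]
          rw [hfw]
          by_cases h1 : u ∈ G.neighborFinset w
          · rw [if_pos h1, if_pos (heq.mp h1)]; ring
          · rw [if_neg h1, if_neg (fun h => h1 (heq.mpr h))]; ring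
    simp only [Pi.sub_apply, Pi.zero_apply, Pi.smul_apply, smul_eq_mul, key]
    ring
  -- the family in the kernel indexed by T.erase u0
  set g : {x // x ∈ T.erase u0} → K :=
    fun u => ⟨f u.1, hker u.1 (Finset.mem_of_mem_erase u.2)⟩ with hg
  have hindep : LinearIndependent ℝ g := by
    rw [Fintype.linearIndependent_iff]
    intro c hc i
    have := congrArg (fun x : K => (x : V → ℝ) i.1) hc
    simp only [Submodule.coe_sum, Finset.sum_apply, ZeroMemClass.coe_zero, Pi.zero_apply] at this
    have hval : ∀ j : {x // x ∈ T.erase u0},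
        ((c j • g j : K) : V → ℝ) i.1 = if j = i then c j else 0 := by
      intro j
      simp only [hg, SetLike.val_smul, Pi.smul_apply, hf, Pi.sub_apply, smul_eq_mul]
      have hi0 : i.1 ≠ u0 := Finset.ne_of_mem_erase i.2
      rw [Pi.single_eq_of_ne hi0]
      by_cases hji : j = i
      · subst hji; rw [Pi.single_eq_same]; simp
      · have : j.1 ≠ i.1 := fun h => hji (Subtype.ext h)
        rw [Pi.single_eq_of_ne (Ne.symm this)]
        simp [hji]
    rw [Finset.sum_congr rfl (fun j _ => hval j)] at this
    simpa using this
  have hcard := hindep.fintype_card_le_finrank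
  rwa [Fintype.card_coe, Finset.card_erase_of_mem hu0] at hcard
end

section
/- If G₁ and G₂ are L-cospectral graphs on the same number of vertices, then for any finite simple graph G′, the joins G′ ⊗ G₁ and G′ ⊗ G₂ are L-cospectral. -/
attribute [local instance] Classical.propDecidable

/-- The join of two simple graphs. -/
def graphJoin {α β : Type} (G : SimpleGraph α) (H : SimpleGraph β) : SimpleGraph (α ⊕ β) where
  Adj x y := match x, y with
    | Sum.inl a, Sum.inl b => G.Adj a b
    | Sum.inr a, Sum.inr b => H.Adj a b
    | Sum.inl _, Sum.inr _ => True
    | Sum.inr _, Sum.inl _ => True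
  symm := ⟨by rintro (a|a) (b|b) h <;> first | exact h.symm | trivial⟩
  loopless := ⟨by rintro (a|a) h; exact G.irrefl h; exact H.irrefl h⟩

/-!
Real symmetric matrices with the same characteristic polynomial are orthogonally similar, say
`Q L(G₁) Qᵀ = L(G₂)`. Both Laplacians kill the all-ones vector `𝟙`, so `Q𝟙 - 𝟙 ∈ ker L(G₂)`
and the Householder reflection exchanging `Q𝟙` and `𝟙` commutes with `L(G₂)`; composing `Q` with
it we may assume `Q𝟙 = 𝟙`. The Laplacian of `G' ⊗ G` is the block matrix
`[[L(G') + |G|·I, -J], [-J, L(G) + |G'|·I]]` with `J = 𝟙𝟙ᵀ`, and `Q` fixes `J` on both sides, so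
conjugation by `diag(I, Q)` carries the Laplacian of `G' ⊗ G₁` to that of `G' ⊗ G₂`.
-/

open Matrix Polynomial SimpleGraph

namespace Matrix

variable {K n : Type*} [Field K] [Fintype n] [DecidableEq n]

/-- The reflection in the hyperplane `wᗮ`; the junk value `2 / 0 = 0` makes `householder 0 = 1`. -/
noncomputable def householder (w : n → K) : Matrix n n K :=
  1 - (2 / (w ⬝ᵥ w)) • vecMulVec w w

variable (w : n → K)

lemma householder_transpose : (householder w)ᵀ = householder w := by
  simp [householder, transpose_vecMulVec]

lemma householder_mul_self : householder w * householder w = 1 := by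
  by_cases hw : w ⬝ᵥ w = 0
  · simp [householder, hw]
  · have hsq : vecMulVec w w * vecMulVec w w = (w ⬝ᵥ w) • vecMulVec w w := by
      rw [vecMulVec_mul_vecMulVec, vecMulVec_smul]
    simp only [householder, sub_mul, mul_sub, one_mul, mul_one, smul_mul_smul_comm, hsq, smul_smul]
    rw [show 2 / (w ⬝ᵥ w) * (2 / (w ⬝ᵥ w)) * (w ⬝ᵥ w) = 2 / (w ⬝ᵥ w) + 2 / (w ⬝ᵥ w) by
      field_simp; ring, add_smul]
    abel

lemma householder_sub_mulVec [LinearOrder K] [IsStrictOrderedRing K] {u v : n → K}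
    (h : u ⬝ᵥ u = v ⬝ᵥ v) : householder (u - v) *ᵥ u = v := by
  set w := u - v
  have hc : w ⬝ᵥ w = 2 * (w ⬝ᵥ u) := by
    simp only [w, sub_dotProduct, dotProduct_sub, dotProduct_comm v u, h]; ring
  by_cases hw : w ⬝ᵥ w = 0
  · rw [dotProduct_self_eq_zero] at hw
    simp [householder, hw, ← sub_eq_zero.mp hw]
  · rw [householder, sub_mulVec, one_mulVec, smul_mulVec, vecMulVec_mulVec, op_smul_eq_smul,
      smul_smul, hc, div_mul_eq_mul_div, mul_div_mul_left _ _ two_ne_zero,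
      div_self (by simpa [hc] using hw), one_smul, sub_sub_cancel]

lemma mul_householder {A : Matrix n n K} (hA : A *ᵥ w = 0) :
    A * householder w = A := by
  rw [householder, mul_sub, mul_one, mul_smul_comm, mul_vecMulVec, hA, zero_vecMulVec, smul_zero,
    sub_zero]

lemma householder_mul {A : Matrix n n K} (hA : w ᵥ* A = 0) :
    householder w * A = A := by
  rw [householder, sub_mul, one_mul, smul_mul_assoc, vecMulVec_mul, hA, vecMulVec_zero, smul_zero,
    sub_zero]

lemma charpoly_conj_of_transpose_mul_self {R : Type*} [CommRing R] {Q : Matrix n n R}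
    (hQ : Qᵀ * Q = 1) (A : Matrix n n R) : (Q * A * Qᵀ).charpoly = A.charpoly := by
  rw [charpoly_mul_comm, ← Matrix.mul_assoc, hQ, Matrix.one_mul]

end Matrix

namespace Matrix.IsHermitian

variable {n : Type*} [Fintype n] [DecidableEq n] {A B : Matrix n n ℝ}

lemma charpoly_eq_of_roots_eq (hA : A.IsHermitian) (hB : B.IsHermitian)
    (h : A.charpoly.roots = B.charpoly.roots) : A.charpoly = B.charpoly := by
  rw [hA.splits_charpoly.eq_prod_roots_of_monic A.charpoly_monic,
    hB.splits_charpoly.eq_prod_roots_of_monic B.charpoly_monic, h]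

lemma exists_orthogonal_conj_eq (hA : A.IsHermitian) (hB : B.IsHermitian)
    (h : A.charpoly = B.charpoly) : ∃ Q : Matrix n n ℝ, Qᵀ * Q = 1 ∧ Q * A * Qᵀ = B := by
  have star_eq_transpose (M : Matrix n n ℝ) : star M = Mᵀ := by
    rw [star_eq_conjTranspose, conjTranspose_eq_transpose_of_trivial]
  let U : unitaryGroup n ℝ := hB.eigenvectorUnitary * star hA.eigenvectorUnitary
  refine ⟨U, by rw [← star_eq_transpose, Unitary.coe_star_mul_self], ?_⟩
  calc (U : Matrix n n ℝ) * A * Uᵀ = Unitary.conjStarAlgAut ℝ _ U A := by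
        rw [Unitary.conjStarAlgAut_apply, star_eq_transpose]
    _ = B := by
        rw [Unitary.conjStarAlgAut_mul_apply, conjStarAlgAut_star_eigenvectorUnitary,
          (hA.eigenvalues_eq_eigenvalues_iff hB).2 h, ← hB.spectral_theorem]

lemma exists_orthogonal_conj_eq_of_mulVec_eq_zero (hA : A.IsHermitian) (hB : B.IsHermitian)
    (h : A.charpoly = B.charpoly) {v : n → ℝ} (hAv : A *ᵥ v = 0) (hBv : B *ᵥ v = 0) :
    ∃ Q : Matrix n n ℝ, Qᵀ * Q = 1 ∧ Q * A * Qᵀ = B ∧ Q *ᵥ v = v := by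
  obtain ⟨Q₀, hQ₀, hQ₀A⟩ := hA.exists_orthogonal_conj_eq hB h
  have hu : (Q₀ *ᵥ v) ⬝ᵥ (Q₀ *ᵥ v) = v ⬝ᵥ v := by
    rw [dotProduct_mulVec, ← vecMul_transpose, vecMul_vecMul, hQ₀, vecMul_one]
  have hBu : B *ᵥ (Q₀ *ᵥ v) = 0 := by
    rw [← hQ₀A, mulVec_mulVec, Matrix.mul_assoc, hQ₀, Matrix.mul_one, ← mulVec_mulVec, hAv,
      mulVec_zero]
  have hBw : B *ᵥ (Q₀ *ᵥ v - v) = 0 := by rw [mulVec_sub, hBu, hBv, sub_zero]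
  have hBt : Bᵀ = B := by rw [← conjTranspose_eq_transpose_of_trivial]; exact hB
  refine ⟨householder (Q₀ *ᵥ v - v) * Q₀, ?_, ?_, ?_⟩
  · rw [transpose_mul, householder_transpose, Matrix.mul_assoc,
      ← Matrix.mul_assoc (householder _), householder_mul_self, Matrix.one_mul, hQ₀]
  · calc householder (Q₀ *ᵥ v - v) * Q₀ * A * (householder (Q₀ *ᵥ v - v) * Q₀)ᵀ
          = householder (Q₀ *ᵥ v - v) * B * householder (Q₀ *ᵥ v - v) := by
          rw [transpose_mul, householder_transpose, ← hQ₀A]; simp only [Matrix.mul_assoc]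
      _ = B := by
          rw [householder_mul _ (by rw [← mulVec_transpose, hBt, hBw]),
            mul_householder _ hBw]
  · rw [← mulVec_mulVec, householder_sub_mulVec hu]

end Matrix.IsHermitian

section Join

variable {α β : Type} (G : SimpleGraph α) (H : SimpleGraph β)

@[simp] lemma graphJoin_adj_inl_inl {a a' : α} :
    (graphJoin G H).Adj (Sum.inl a) (Sum.inl a') ↔ G.Adj a a' := Iff.rfl

@[simp] lemma graphJoin_adj_inr_inr {b b' : β} :
    (graphJoin G H).Adj (Sum.inr b) (Sum.inr b') ↔ H.Adj b b' := Iff.rfl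

@[simp] lemma graphJoin_adj_inl_inr (a : α) (b : β) :
    (graphJoin G H).Adj (Sum.inl a) (Sum.inr b) :=
  trivial

@[simp] lemma graphJoin_adj_inr_inl (b : β) (a : α) :
    (graphJoin G H).Adj (Sum.inr b) (Sum.inl a) :=
  trivial

variable [Fintype α] [Fintype β] [DecidableRel (graphJoin G H).Adj]

lemma neighborFinset_graphJoin_inl [DecidableRel G.Adj] (a : α) :
    (graphJoin G H).neighborFinset (Sum.inl a) = (G.neighborFinset a).disjSum Finset.univ := by
  ext (b | b) <;> simp

lemma neighborFinset_graphJoin_inr [DecidableRel H.Adj] (b : β) :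
    (graphJoin G H).neighborFinset (Sum.inr b) = Finset.univ.disjSum (H.neighborFinset b) := by
  ext (a | a) <;> simp

lemma degree_graphJoin_inl [DecidableRel G.Adj] (a : α) :
    (graphJoin G H).degree (Sum.inl a) = G.degree a + Fintype.card β := by
  rw [← card_neighborFinset_eq_degree, neighborFinset_graphJoin_inl, Finset.card_disjSum,
    Finset.card_univ, card_neighborFinset_eq_degree]

lemma degree_graphJoin_inr [DecidableRel H.Adj] (b : β) :
    (graphJoin G H).degree (Sum.inr b) = H.degree b + Fintype.card α := by
  rw [← card_neighborFinset_eq_degree, neighborFinset_graphJoin_inr, Finset.card_disjSum,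
    Finset.card_univ, card_neighborFinset_eq_degree, add_comm]

lemma lapMatrix_graphJoin [DecidableEq α] [DecidableEq β] [DecidableRel G.Adj]
    [DecidableRel H.Adj] (R : Type*) [Ring R] :
    (graphJoin G H).lapMatrix R =
      fromBlocks (G.lapMatrix R + (Fintype.card β : R) • 1) (-vecMulVec 1 1)
        (-vecMulVec 1 1) (H.lapMatrix R + (Fintype.card α : R) • 1) := by
  ext (i | i) (j | j)
  · rcases eq_or_ne i j with rfl | hij <;>
      simp [lapMatrix, degMatrix, degree_graphJoin_inl, adjMatrix_apply, one_apply, *]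
  · simp [lapMatrix, degMatrix]
  · simp [lapMatrix, degMatrix]
  · rcases eq_or_ne i j with rfl | hij <;>
      simp [lapMatrix, degMatrix, degree_graphJoin_inr, adjMatrix_apply, one_apply, *]

end Join

lemma charpoly_lapMatrix_graphJoin_eq {α β : Type} [Fintype α] [Fintype β] [DecidableEq α]
    [DecidableEq β] (G : SimpleGraph α) {H₁ H₂ : SimpleGraph β} [DecidableRel G.Adj]
    [DecidableRel H₁.Adj] [DecidableRel H₂.Adj] [DecidableRel (graphJoin G H₁).Adj]
    [DecidableRel (graphJoin G H₂).Adj]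
    (h : (H₁.lapMatrix ℝ).charpoly = (H₂.lapMatrix ℝ).charpoly) :
    ((graphJoin G H₁).lapMatrix ℝ).charpoly = ((graphJoin G H₂).lapMatrix ℝ).charpoly := by
  obtain ⟨Q, hQ, hQL, hQ1⟩ :=
    (H₁.isHermitian_lapMatrix ℝ).exists_orthogonal_conj_eq_of_mulVec_eq_zero
      (H₂.isHermitian_lapMatrix ℝ) h (v := 1) H₁.lapMatrix_mulVec_const_eq_zero
      H₂.lapMatrix_mulVec_const_eq_zero
  have hQ' : Q * Qᵀ = 1 := mul_eq_one_comm.mp hQ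
  let S : Matrix (α ⊕ β) (α ⊕ β) ℝ := fromBlocks 1 0 0 Q
  have hS : Sᵀ * S = 1 := by
    simp [S, fromBlocks_transpose, fromBlocks_multiply, hQ, fromBlocks_one]
  have hQJ : Q * vecMulVec (1 : β → ℝ) (1 : α → ℝ) = vecMulVec 1 1 := by
    rw [mul_vecMulVec, hQ1]
  have hJQ : vecMulVec (1 : α → ℝ) (1 : β → ℝ) * Qᵀ = vecMulVec 1 1 := by
    rw [vecMulVec_mul, vecMul_transpose, hQ1]
  have hconj : S * (graphJoin G H₁).lapMatrix ℝ * Sᵀ = (graphJoin G H₂).lapMatrix ℝ := by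
    simp only [S, lapMatrix_graphJoin, fromBlocks_transpose, fromBlocks_multiply, transpose_one,
      transpose_zero, Matrix.one_mul, Matrix.mul_one, Matrix.zero_mul, Matrix.mul_zero, add_zero,
      zero_add, neg_zero, Matrix.neg_mul, Matrix.mul_neg, hQJ, hJQ, Matrix.mul_add, Matrix.add_mul,
      hQL, mul_smul_comm, smul_mul_assoc, hQ']
  rw [← hconj, charpoly_conj_of_transpose_mul_self hS]

/-- Joining a fixed graph to L-cospectral graphs yields L-cospectral graphs. -/
theorem join_preserves_L_cospectral {n m : ℕ}
    (G₁ G₂ : SimpleGraph (Fin n)) (G' : SimpleGraph (Fin m))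
    (h : ((G₁.lapMatrix ℝ).charpoly.roots = (G₂.lapMatrix ℝ).charpoly.roots)) :
    ((graphJoin G' G₁).lapMatrix ℝ).charpoly.roots =
      ((graphJoin G' G₂).lapMatrix ℝ).charpoly.roots :=
  congrArg roots <| charpoly_lapMatrix_graphJoin_eq G' <|
    (G₁.isHermitian_lapMatrix ℝ).charpoly_eq_of_roots_eq (G₂.isHermitian_lapMatrix ℝ) h
end

section
/- If the diagonalization recurrence dₖ ← α + β, d_l ← αβ/(α + β) is applied starting with m copies of a value y ≠ 0, then after j iterations (1 ≤ j ≤ m−1) the removed value is ((j+1)/j)·y and the surviving value is y/(j+1). In particular all intermediate denominators α + β are nonzero. -/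
/-- Duplicate (union) case of the diagonalization recurrence: starting from `m` copies of
`y ≠ 0`, after `j` iterations the removed value is `((j+1)/j)·y`, the surviving value is
`y/(j+1)`, and all denominators `α + β` are nonzero. -/
theorem duplicate_diagonalization_recurrence (y : ℝ) (hy : y ≠ 0) (m : ℕ) (hm : 2 ≤ m)
    (surv : ℕ → ℝ) (h0 : surv 0 = y)
    (hstep : ∀ j, surv (j + 1) = (surv j * y) / (surv j + y)) :
    ∀ j, 1 ≤ j → j ≤ m - 1 →
      surv (j - 1) + y ≠ 0 ∧
      surv (j - 1) + y = ((j + 1 : ℝ) / (j : ℝ)) * y ∧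
      surv j = y / ((j : ℝ) + 1) := by
  have key : ∀ j : ℕ, surv j = y / ((j : ℝ) + 1) := by
    intro j
    induction j with
    | zero => simpa using h0
    | succ k ih =>
      have hk1 : ((k : ℝ) + 1) ≠ 0 := by positivity
      have hk2 : ((k : ℝ) + 2) ≠ 0 := by positivity
      have hne : surv k + y ≠ 0 := by
        rw [ih]
        rw [div_add' _ _ _ hk1]
        refine div_ne_zero ?_ hk1
        have : y + y * ((k : ℝ) + 1) = y * ((k : ℝ) + 2) := by ring
        rw [this]
        exact mul_ne_zero hy hk2
      push_cast
      rw [hstep k, div_eq_div_iff hne (by positivity : ((k : ℝ) + 1 + 1) ≠ 0), ih]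
      field_simp
      ring
  intro j hj1 _
  obtain ⟨k, rfl⟩ := Nat.exists_eq_add_of_le hj1
  simp only [Nat.add_sub_cancel_left] at *
  have hk1 : ((k : ℝ) + 1) ≠ 0 := by positivity
  have hk2 : ((k : ℝ) + 2) ≠ 0 := by positivity
  have h1 : surv k + y = ((((1 + k : ℕ) : ℝ) + 1) / ((1 + k : ℕ) : ℝ)) * y := by
    rw [key k]; push_cast; field_simp; ring
  refine ⟨?_, h1, ?_⟩
  · rw [h1]
    refine mul_ne_zero ?_ hy
    positivity
  · exact key (1 + k)
end
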